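/- For β ∈ ℝ let X(β) = H · Z(β) · H, where H is the Hadamard matrix and Z(β) = diag(1, e^{iβ}). Then exactly one of the following three mutually exclusive cases holds: (i) cos β = 0, in which case each of the two rows of X(β) is proportional to an equatorial effect ⟨0| + e^{iψ}⟨1| for some ψ ∈ ℝ (green failure); (ii) sin β = 0, in which case each row of X(β) is proportional to a computational-basis effect ⟨0| or ⟨1| (red failure, disconnecting); (iii) sin β · cos β ≠ 0, in which case in each row of X(β) the two entries are nonzero and have distinct moduli, so the row is proportional neither to an equatorial effect nor to a basis effect (non-unitary, non-correctable failure). -/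

import Mathlib

open Complex

/-- The phase gate `Z(β) = diag(1, e^{iβ})`. -/
noncomputable def Zrot (β : ℝ) : Matrix (Fin 2) (Fin 2) ℂ :=
  !![1, 0; 0, Complex.exp (β * Complex.I)]

/-- The Hadamard matrix `H = (1/√2)·[[1,1],[1,−1]]`. -/
noncomputable def Hmat : Matrix (Fin 2) (Fin 2) ℂ :=
  ((Real.sqrt 2 : ℂ))⁻¹ • !![1, 1; 1, -1]

/-- `X(β) = H · Z(β) · H`. -/
noncomputable def Xrot (β : ℝ) : Matrix (Fin 2) (Fin 2) ℂ := Hmat * Zrot β * Hmat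

/-- An equatorial (green) effect: a functional on `ℂ²` proportional to
`⟨0| + e^{iψ}⟨1|` for some `ψ ∈ ℝ`. -/
def IsEquatorialEffect (r : Fin 2 → ℂ) : Prop :=
  ∃ (c : ℂ) (ψ : ℝ), c ≠ 0 ∧ r 0 = c ∧ r 1 = c * Complex.exp (ψ * Complex.I)

/-- A computational-basis (red) effect: a functional on `ℂ²` proportional to
`⟨0|` or to `⟨1|`. -/
def IsBasisEffect (r : Fin 2 → ℂ) : Prop :=
  (∃ c : ℂ, c ≠ 0 ∧ r 0 = c ∧ r 1 = 0) ∨ (∃ c : ℂ, c ≠ 0 ∧ r 0 = 0 ∧ r 1 = c)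

/-!
The entries of `X(β)` are `(1 ± e^{iβ})/2`, with squared moduli `(1 ± cos β)/2`. Hence in
each row the product of the squared moduli is `sin² β / 4` and their difference is `± cos β`:
`sin β` decides whether an entry vanishes and `cos β` whether the two moduli agree. A row is an
equatorial effect exactly when its entries are nonzero of equal modulus, and a basis effect
exactly when one entry vanishes and the other does not.
-/

namespace Complex

lemma normSq_one_add_exp_mul_I (β : ℝ) : normSq (1 + exp (β * I)) = 2 + 2 * Real.cos β := by
  rw [normSq_add, normSq_one, one_mul, conj_re, normSq_eq_norm_sq, norm_exp_ofReal_mul_I,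
    exp_ofReal_mul_I_re]
  ring

lemma normSq_one_sub_exp_mul_I (β : ℝ) : normSq (1 - exp (β * I)) = 2 - 2 * Real.cos β := by
  rw [normSq_sub, normSq_one, one_mul, conj_re, normSq_eq_norm_sq, norm_exp_ofReal_mul_I,
    exp_ofReal_mul_I_re]
  ring

lemma exists_eq_mul_exp_mul_I_of_norm_eq {a b : ℂ} (ha : a ≠ 0) (hab : ‖a‖ = ‖b‖) :
    ∃ ψ : ℝ, b = a * exp (ψ * I) := by
  have hb : ‖b‖ ≠ 0 := by simpa [← hab] using ha
  obtain ⟨ψ, hψ⟩ := (norm_eq_one_iff (b / a)).1 (by rw [norm_div, hab, div_self hb])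
  exact ⟨ψ, by rw [hψ, mul_div_cancel₀ _ ha]⟩

end Complex

open Complex

lemma isEquatorialEffect_iff (r : Fin 2 → ℂ) :
    IsEquatorialEffect r ↔ r 0 ≠ 0 ∧ ‖r 0‖ = ‖r 1‖ := by
  constructor
  · rintro ⟨c, ψ, hc, h0, h1⟩
    rw [h0, h1, norm_mul, norm_exp_ofReal_mul_I, mul_one]
    exact ⟨hc, rfl⟩
  · rintro ⟨h0, h01⟩
    obtain ⟨ψ, hψ⟩ := exists_eq_mul_exp_mul_I_of_norm_eq h0 h01
    exact ⟨r 0, ψ, h0, rfl, hψ⟩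

lemma isBasisEffect_iff (r : Fin 2 → ℂ) : IsBasisEffect r ↔ Xor (r 0 = 0) (r 1 = 0) := by
  unfold IsBasisEffect Xor
  constructor
  · rintro (⟨c, hc, h0, h1⟩ | ⟨c, hc, h0, h1⟩)
    · exact Or.inr ⟨h1, h0 ▸ hc⟩
    · exact Or.inl ⟨h0, h1 ▸ hc⟩
  · rintro (⟨h0, h1⟩ | ⟨h1, h0⟩)
    · exact Or.inr ⟨r 1, h1, h0, rfl⟩
    · exact Or.inl ⟨r 0, h0, rfl, h1⟩

lemma Xrot_eq (β : ℝ) : Xrot β =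
    !![(1 + exp (β * I)) / 2, (1 - exp (β * I)) / 2;
       (1 - exp (β * I)) / 2, (1 + exp (β * I)) / 2] := by
  have h : ((Real.sqrt 2 : ℂ))⁻¹ * ((Real.sqrt 2 : ℂ))⁻¹ = 2⁻¹ := by
    rw [← mul_inv, ← ofReal_mul, Real.mul_self_sqrt zero_le_two, ofReal_ofNat]
  simp only [Xrot, Hmat, Matrix.smul_mul, Matrix.mul_smul, smul_smul, h]
  ext i j
  fin_cases i <;> fin_cases j <;> simp [Zrot] <;> ring

lemma normSq_Xrot_row_mul (β : ℝ) (i : Fin 2) :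
    normSq (Xrot β i 0) * normSq (Xrot β i 1) = Real.sin β ^ 2 / 4 := by
  fin_cases i <;>
    simp [Xrot_eq, normSq_one_add_exp_mul_I, normSq_one_sub_exp_mul_I] <;>
    linear_combination (-1/4 : ℝ) * Real.sin_sq_add_cos_sq β

lemma normSq_Xrot_row_sub_sq (β : ℝ) (i : Fin 2) :
    (normSq (Xrot β i 0) - normSq (Xrot β i 1)) ^ 2 = Real.cos β ^ 2 := by
  fin_cases i <;> simp [Xrot_eq, normSq_one_add_exp_mul_I, normSq_one_sub_exp_mul_I] <;> ring

lemma Xrot_row_ne_zero_iff (β : ℝ) (i : Fin 2) :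
    (Xrot β i 0 ≠ 0 ∧ Xrot β i 1 ≠ 0) ↔ Real.sin β ≠ 0 := by
  rw [← mul_ne_zero_iff, Ne, ← normSq_eq_zero, map_mul, normSq_Xrot_row_mul]
  simp

lemma norm_Xrot_row_eq_iff (β : ℝ) (i : Fin 2) :
    ‖Xrot β i 0‖ = ‖Xrot β i 1‖ ↔ Real.cos β = 0 := by
  rw [← sq_eq_sq₀ (norm_nonneg _) (norm_nonneg _), ← normSq_eq_norm_sq, ← normSq_eq_norm_sq,
    ← sub_eq_zero, ← pow_eq_zero_iff two_ne_zero, normSq_Xrot_row_sub_sq,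
    pow_eq_zero_iff two_ne_zero]

/-- Trichotomy for the failure behaviour of the fusion determined by `X(β) = H Z(β) H`:
(i) if `cos β = 0` each row of `X(β)` is an equatorial effect (green failure);
(ii) if `sin β = 0` each row is a computational-basis effect (red, disconnecting failure);
(iii) if `sin β · cos β ≠ 0` each row has two nonzero entries of distinct moduli, hence is
proportional neither to an equatorial effect nor to a basis effect (non-unitary,
non-correctable failure).  The three case assumptions are mutually exclusive and
exhaustive. -/
theorem fusion_failure_trichotomy (β : ℝ) :
    (Real.cos β = 0 → ∀ i : Fin 2, IsEquatorialEffect (Xrot β i)) ∧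
    (Real.sin β = 0 → ∀ i : Fin 2, IsBasisEffect (Xrot β i)) ∧
    (Real.sin β * Real.cos β ≠ 0 → ∀ i : Fin 2,
      (Xrot β i 0 ≠ 0 ∧ Xrot β i 1 ≠ 0 ∧
        ‖Xrot β i 0‖ ≠ ‖Xrot β i 1‖) ∧
      ¬ IsEquatorialEffect (Xrot β i) ∧ ¬ IsBasisEffect (Xrot β i)) := by
  have hpyth := Real.sin_sq_add_cos_sq β
  refine ⟨fun hc i => ?_, fun hs i => ?_, fun hsc i => ?_⟩
  · have hs : Real.sin β ≠ 0 := by rintro hs; simp [hs, hc] at hpyth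
    exact (isEquatorialEffect_iff _).2
      ⟨((Xrot_row_ne_zero_iff β i).2 hs).1, (norm_Xrot_row_eq_iff β i).2 hc⟩
  · have hc : Real.cos β ≠ 0 := by rintro hc; simp [hs, hc] at hpyth
    have hzero := mt (Xrot_row_ne_zero_iff β i).1 (not_not.2 hs)
    have hnorm := mt (norm_Xrot_row_eq_iff β i).1 hc
    rw [isBasisEffect_iff]
    by_cases h0 : Xrot β i 0 = 0 <;> by_cases h1 : Xrot β i 1 = 0 <;> simp_all [Xor]
  · obtain ⟨hs, hc⟩ := mul_ne_zero_iff.1 hsc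
    obtain ⟨h0, h1⟩ := (Xrot_row_ne_zero_iff β i).2 hs
    have hnorm := mt (norm_Xrot_row_eq_iff β i).1 hc
    simp [isEquatorialEffect_iff, isBasisEffect_iff, Xor, h0, h1, hnorm]
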